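/- Let N be the 3×3 nilpotent Jordan block with ones on the superdiagonal. Every vector field of the form h = (x φ1, y φ1 + x φ2, z φ1 + y φ2 + φ3), where φ_i = φ_i(x, 2xz - y^2) are polynomials, lies in the kernel of ad_{N^*}. -/

import Mathlib

open MvPolynomial Matrix

noncomputable def Pnd (n d : ℕ) : Submodule ℝ (MvPolynomial (Fin n) ℝ) :=
  homogeneousSubmodule (Fin n) ℝ d

noncomputable def Fnd (n d : ℕ) : Submodule ℝ (Fin n → MvPolynomial (Fin n) ℝ) :=
  Submodule.pi Set.univ fun _ => homogeneousSubmodule (Fin n) ℝ d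

noncomputable def divL (n : ℕ) : (Fin n → MvPolynomial (Fin n) ℝ) →ₗ[ℝ] MvPolynomial (Fin n) ℝ :=
  ∑ i, (pderiv i).toLinearMap ∘ₗ LinearMap.proj i

noncomputable def adL {n : ℕ} (N : Matrix (Fin n) (Fin n) ℝ) :
    (Fin n → MvPolynomial (Fin n) ℝ) →ₗ[ℝ] (Fin n → MvPolynomial (Fin n) ℝ) :=
  LinearMap.pi fun i =>
    (∑ j, (LinearMap.mulLeft ℝ (∑ k, N j k • (X k : MvPolynomial (Fin n) ℝ))) ∘ₗ
        (pderiv j).toLinearMap ∘ₗ LinearMap.proj i)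
      - ∑ j, N i j • LinearMap.proj j

noncomputable def diffOp {n : ℕ} (m : Fin n →₀ ℕ) :
    Module.End ℝ (MvPolynomial (Fin n) ℝ) :=
  (List.finRange n).foldr
    (fun i f => (((pderiv i).toLinearMap : Module.End ℝ (MvPolynomial (Fin n) ℝ)) ^ (m i)) * f) 1

/-- Fischer inner product `⟨p,q⟩ = p(∂_ξ) q(ξ) |_{ξ=0}`. -/
noncomputable def fischer {n : ℕ} (p q : MvPolynomial (Fin n) ℝ) : ℝ :=
  constantCoeff (∑ m ∈ p.support, (fun m c => c • (diffOp m q)) m (coeff m p))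

noncomputable def fischerV {n : ℕ} (p q : Fin n → MvPolynomial (Fin n) ℝ) : ℝ :=
  ∑ i, fischer (p i) (q i)

noncomputable def radialL (n : ℕ) : MvPolynomial (Fin n) ℝ →ₗ[ℝ] (Fin n → MvPolynomial (Fin n) ℝ) :=
  LinearMap.pi fun i => LinearMap.mulLeft ℝ (X i)

noncomputable def Und (n d : ℕ) : Submodule ℝ (Fin n → MvPolynomial (Fin n) ℝ) :=
  Submodule.map (radialL n) (Pnd n (d - 1))

def N3 : Matrix (Fin 3) (Fin 3) ℝ := !![0,1,0; 0,0,1; 0,0,0]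

noncomputable def B3 : MvPolynomial (Fin 3) ℝ := 2 * X 0 * X 2 - X 1 ^ 2

/-!
Write `D = x ∂_y + y ∂_z` for the derivation along `N^* ξ = (0, x, y)`, so that
`ad_{N^*} h = D h - N^* h` componentwise. Since `D x = 0` and `D β = 0`, `D` kills every
polynomial in `x` and `β`. With `D y = x` and `D z = y`, the Leibniz rule then gives
`D h₁ = 0`, `D h₂ = h₁`, `D h₃ = h₂`, which is exactly `D h = N^* h`.
-/

theorem Derivation.map_aeval_eq_zero {R A M σ : Type*} [CommSemiring R] [CommSemiring A]
    [Algebra R A] [AddCommMonoid M] [Module A M] [Module R M]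
    (D : Derivation R A M) {f : σ → A} (hf : ∀ i, D (f i) = 0) (φ : MvPolynomial σ R) :
    D (aeval f φ) = 0 :=
  D.eqOn_adjoin (D2 := 0) (s := Set.range f) (by rintro _ ⟨i, rfl⟩; exact hf i)
    (by rw [Algebra.adjoin_range_eq_range_aeval]; exact ⟨φ, rfl⟩)

section LinearFieldDeriv

variable {R : Type*} [CommSemiring R] {n : ℕ}

/-- The derivation `(N ξ)·∇` along the linear vector field `ξ ↦ N ξ`. -/
noncomputable def linearFieldDeriv (N : Matrix (Fin n) (Fin n) R) :
    Derivation R (MvPolynomial (Fin n) R) (MvPolynomial (Fin n) R) :=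
  ∑ j, (∑ k, N j k • X k : MvPolynomial (Fin n) R) • pderiv j

theorem linearFieldDeriv_apply (N : Matrix (Fin n) (Fin n) R) (p : MvPolynomial (Fin n) R) :
    linearFieldDeriv N p = ∑ j, (∑ k, N j k • X k) * pderiv j p := by
  rw [linearFieldDeriv, ← Derivation.coeFnAddMonoidHom_apply, map_sum]
  simp [Derivation.coeFnAddMonoidHom_apply]

theorem linearFieldDeriv_X (N : Matrix (Fin n) (Fin n) R) (i : Fin n) :
    linearFieldDeriv N (X i) = ∑ k, N i k • X k := by
  simp [linearFieldDeriv_apply, pderiv_X, Pi.single_apply]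

end LinearFieldDeriv

theorem adL_apply {n : ℕ} (N : Matrix (Fin n) (Fin n) ℝ) (h : Fin n → MvPolynomial (Fin n) ℝ)
    (i : Fin n) : adL N h i = linearFieldDeriv N (h i) - ∑ j, N i j • h j := by
  simp [adL, linearFieldDeriv_apply]

theorem linearFieldDeriv_N3_transpose_X :
    linearFieldDeriv N3ᵀ (X 0) = 0 ∧ linearFieldDeriv N3ᵀ (X 1) = X 0 ∧
      linearFieldDeriv N3ᵀ (X 2) = X 1 := by
  simp [linearFieldDeriv_X, Fin.sum_univ_three, N3]

theorem linearFieldDeriv_N3_transpose_B3 : linearFieldDeriv N3ᵀ B3 = 0 := by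
  obtain ⟨h0, h1, h2⟩ := linearFieldDeriv_N3_transpose_X
  have htwo : linearFieldDeriv N3ᵀ 2 = 0 := by
    exact_mod_cast (linearFieldDeriv N3ᵀ).map_natCast 2
  simp only [B3, map_sub, Derivation.leibniz, Derivation.leibniz_pow, h0, h1, h2, htwo,
    smul_eq_mul]
  ring

theorem adL_N3_transpose (h : Fin 3 → MvPolynomial (Fin 3) ℝ) :
    adL N3ᵀ h = ![linearFieldDeriv N3ᵀ (h 0), linearFieldDeriv N3ᵀ (h 1) - h 0,
      linearFieldDeriv N3ᵀ (h 2) - h 1] := by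
  funext i
  fin_cases i <;> simp [adL_apply, Fin.sum_univ_three, N3]

theorem elphick_form_in_kernel (φ1 φ2 φ3 : MvPolynomial (Fin 2) ℝ) :
    adL N3ᵀ
      ![X 0 * aeval ![X 0, B3] φ1,
        X 1 * aeval ![X 0, B3] φ1 + X 0 * aeval ![X 0, B3] φ2,
        X 2 * aeval ![X 0, B3] φ1 + X 1 * aeval ![X 0, B3] φ2 + aeval ![X 0, B3] φ3] = 0 := by
  obtain ⟨h0, h1, h2⟩ := linearFieldDeriv_N3_transpose_X
  have hψ (φ : MvPolynomial (Fin 2) ℝ) : linearFieldDeriv N3ᵀ (aeval ![X 0, B3] φ) = 0 :=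
    (linearFieldDeriv N3ᵀ).map_aeval_eq_zero
      (by simp [Fin.forall_fin_two, h0, linearFieldDeriv_N3_transpose_B3]) φ
  rw [adL_N3_transpose]
  simp only [Matrix.cons_val_zero, Matrix.cons_val_one, Matrix.cons_val_two, Matrix.head_cons,
    Matrix.tail_cons, map_add, Derivation.leibniz, h0, h1, h2, hψ, smul_eq_mul]
  ext i : 1
  fin_cases i <;> simp <;> ring
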